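/- Let G₁ and G₂ be finite abelian groups, let 1 ≤ i < j be integers, and let F : G₁ → G₂ be a function such that δ_F(a,b) ∈ {0, i, j} for every a ∈ G₁ with a ≠ 0 and every b ∈ G₂. Then 2·𝒜(F) = i·j·𝒟(F) + (i + j − 1)·|G₁|·(|G₁| − 1) − i·j·|G₂|·(|G₁| − 1), as an identity of integers. -/

import Mathlib

/-!
Since `2 * (n choose 2) = n (n - 1) = (n - i)(n - j) + (i + j - 1) n - i j` for every `n`,
summing over all `a ≠ 0` and `b` expresses `2 𝒜(F)` through `Σ (δ_F(a,b) - i)(δ_F(a,b) - j)`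
and `Σ_b δ_F(a,b) = |G₁|`. When `δ_F(a,b) ∈ {0, i, j}`, the product
`(δ_F(a,b) - i)(δ_F(a,b) - j)` is `i j` if `δ_F(a,b) = 0` and `0` otherwise, so its sum is
`i j 𝒟(F)`.
-/

open Finset

/-- `δ_F(a,b) = |{x : F(x+a) - F(x) = b}|`. -/
def deltaF {G₁ G₂ : Type*} [AddCommGroup G₁] [Fintype G₁] [DecidableEq G₁]
    [AddCommGroup G₂] [DecidableEq G₂] (F : G₁ → G₂) (a : G₁) (b : G₂) : ℕ :=
  (univ.filter fun x => F (x + a) - F x = b).card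

/-- The ambiguity `𝒜(F) = Σ_{a ≠ 0} Σ_b (δ_F(a,b) choose 2)`. -/
def ambiguity {G₁ G₂ : Type*} [AddCommGroup G₁] [Fintype G₁] [DecidableEq G₁]
    [AddCommGroup G₂] [Fintype G₂] [DecidableEq G₂] (F : G₁ → G₂) : ℕ :=
  ∑ a ∈ univ.filter (fun a : G₁ => a ≠ 0), ∑ b : G₂, (deltaF F a b).choose 2

/-- The deficiency `𝒟(F) = |{(a,b) : a ≠ 0, δ_F(a,b) = 0}|`. -/
def deficiency {G₁ G₂ : Type*} [AddCommGroup G₁] [Fintype G₁] [DecidableEq G₁]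
    [AddCommGroup G₂] [Fintype G₂] [DecidableEq G₂] (F : G₁ → G₂) : ℕ :=
  (univ.filter fun p : G₁ × G₂ => p.1 ≠ 0 ∧ deltaF F p.1 p.2 = 0).card

lemma Nat.two_mul_choose_two_eq (n : ℕ) : (2 * n.choose 2 : ℤ) = n * (n - 1) := by
  rw [← Nat.cast_descFactorial_two, Nat.descFactorial_eq_factorial_mul_choose]
  push_cast [Nat.factorial_two]
  ring

lemma sub_mul_sub_eq_of_eq_zero_or_eq_or_eq {n i j : ℕ} (hn : n = 0 ∨ n = i ∨ n = j) :
    ((n : ℤ) - i) * (n - j) = i * j * if n = 0 then 1 else 0 := by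
  rcases hn with rfl | rfl | rfl <;> split_ifs <;> simp_all

section

variable {G₁ G₂ : Type*} [AddCommGroup G₁] [Fintype G₁] [DecidableEq G₁]
  [AddCommGroup G₂] [Fintype G₂] [DecidableEq G₂]

lemma card_filter_ne_zero_eq :
    ((univ.filter fun a : G₁ => a ≠ 0).card : ℤ) = Fintype.card G₁ - 1 := by
  rw [filter_ne' univ (0 : G₁), card_erase_of_mem (mem_univ _), card_univ,
    Nat.cast_sub Fintype.card_pos, Nat.cast_one]

lemma sum_deltaF (F : G₁ → G₂) (a : G₁) : ∑ b : G₂, deltaF F a b = Fintype.card G₁ :=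
  (card_eq_sum_card_fiberwise (t := univ) fun x _ => mem_univ (F (x + a) - F x)).symm

lemma two_mul_ambiguity_eq (F : G₁ → G₂) (i j : ℤ) :
    2 * (ambiguity F : ℤ) =
      ∑ a ∈ univ.filter (fun a : G₁ => a ≠ 0), ∑ b : G₂,
          ((deltaF F a b : ℤ) - i) * (deltaF F a b - j)
        + (i + j - 1) * Fintype.card G₁ * (Fintype.card G₁ - 1)
        - i * j * Fintype.card G₂ * (Fintype.card G₁ - 1) := by
  have hsum : ∀ a : G₁, ∑ b : G₂, (deltaF F a b : ℤ) = Fintype.card G₁ := fun a => by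
    exact_mod_cast sum_deltaF F a
  calc 2 * (ambiguity F : ℤ)
      = ∑ a ∈ univ.filter (fun a : G₁ => a ≠ 0), ∑ b : G₂,
          ((((deltaF F a b : ℤ) - i) * (deltaF F a b - j)
            + (i + j - 1) * deltaF F a b) - i * j) := by
        simp only [ambiguity, Nat.cast_sum, mul_sum, Nat.two_mul_choose_two_eq]
        congr! 2
        ring
    _ = _ := by
        simp only [sum_sub_distrib, sum_add_distrib, ← mul_sum, hsum, sum_const, card_univ,
          nsmul_eq_mul, card_filter_ne_zero_eq]
        ring

lemma deficiency_eq_sum (F : G₁ → G₂) :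
    (deficiency F : ℤ) =
      ∑ a ∈ univ.filter (fun a : G₁ => a ≠ 0), ∑ b : G₂,
        if deltaF F a b = 0 then (1 : ℤ) else 0 := by
  rw [deficiency, card_filter, Nat.cast_sum, Fintype.sum_prod_type, sum_filter]
  refine sum_congr rfl fun a _ => ?_
  by_cases ha : a = 0 <;> simp [ha]

end

theorem ambiguity_deficiency_of_three_valued_spectrum_general {G₁ G₂ : Type*}
    [AddCommGroup G₁] [Fintype G₁] [DecidableEq G₁]
    [AddCommGroup G₂] [Fintype G₂] [DecidableEq G₂]
    (i j : ℕ) (F : G₁ → G₂)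
    (h : ∀ a : G₁, a ≠ 0 → ∀ b : G₂,
      deltaF F a b = 0 ∨ deltaF F a b = i ∨ deltaF F a b = j) :
    2 * (ambiguity F : ℤ) =
      (i : ℤ) * (j : ℤ) * (deficiency F : ℤ)
        + ((i : ℤ) + (j : ℤ) - 1) * (Fintype.card G₁ : ℤ) * ((Fintype.card G₁ : ℤ) - 1)
        - (i : ℤ) * (j : ℤ) * (Fintype.card G₂ : ℤ) * ((Fintype.card G₁ : ℤ) - 1) := by
  have hspectrum : ∑ a ∈ univ.filter (fun a : G₁ => a ≠ 0), ∑ b : G₂,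
      ((deltaF F a b : ℤ) - i) * (deltaF F a b - j) = i * j * deficiency F := by
    rw [deficiency_eq_sum, mul_sum]
    refine sum_congr rfl fun a ha => ?_
    rw [mul_sum]
    exact sum_congr rfl fun b _ =>
      sub_mul_sub_eq_of_eq_zero_or_eq_or_eq (h a (mem_filter.mp ha).2 b)
  rw [two_mul_ambiguity_eq F i j, hspectrum]

theorem ambiguity_deficiency_of_three_valued_spectrum {G₁ G₂ : Type*}
    [AddCommGroup G₁] [Fintype G₁] [DecidableEq G₁]
    [AddCommGroup G₂] [Fintype G₂] [DecidableEq G₂]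
    (i j : ℕ) (hi : 1 ≤ i) (hij : i < j) (F : G₁ → G₂)
    (h : ∀ a : G₁, a ≠ 0 → ∀ b : G₂,
      deltaF F a b = 0 ∨ deltaF F a b = i ∨ deltaF F a b = j) :
    2 * (ambiguity F : ℤ) =
      (i : ℤ) * (j : ℤ) * (deficiency F : ℤ)
        + ((i : ℤ) + (j : ℤ) - 1) * (Fintype.card G₁ : ℤ) * ((Fintype.card G₁ : ℤ) - 1)
        - (i : ℤ) * (j : ℤ) * (Fintype.card G₂ : ℤ) * ((Fintype.card G₁ : ℤ) - 1) :=
  ambiguity_deficiency_of_three_valued_spectrum_general i j F h
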